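/- Let q be a complex number with 0 < |q| < 1. Define β₀ = 0 and β_n = 1/(q;q)_{2n−1} for n ≥ 1, and define α₀ = 0, α_m = 0 whenever 3 divides m, and for n ≥ 0 set α_{3n+1} = q^{6n²+n} − q^{6n²+7n+2}, while for n ≥ 1 set α_{3n−1} = q^{6n²−n} − q^{6n²−7n+2}. Then for every integer N ≥ 0, β_N = ∑_{k=0}^{N} α_k / ((q;q)_{N−k} · (q;q)_{N+k}); that is, (α,β) is a Bailey pair relative to (1,q). -/

import Mathlib

open scoped BigOperators

noncomputable section

/-- The finite q-Pochhammer symbol `(a;q)_n = ∏_{k=0}^{n-1} (1 - a q^k)`. -/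
def pochN (a q : ℂ) (n : ℕ) : ℂ := ∏ k ∈ Finset.range n, (1 - a * q ^ k)

/-- The Bailey pair sequence α: `α_m = 0` if `3 ∣ m`,
`α_{3n+1} = q^{6n²+n} − q^{6n²+7n+2}` and `α_{3n−1} = q^{6n²−n} − q^{6n²−7n+2}`. -/
def baileyAlpha (q : ℂ) (m : ℕ) : ℂ :=
  if m % 3 = 0 then 0
  else if m % 3 = 1 then
    q ^ (6 * (m / 3) ^ 2 + m / 3) - q ^ (6 * (m / 3) ^ 2 + 7 * (m / 3) + 2)
  else
    q ^ (6 * ((m + 1) / 3) ^ 2 - (m + 1) / 3) -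
      q ^ (6 * ((m + 1) / 3) ^ 2 + 2 - 7 * ((m + 1) / 3))

/-- The Bailey pair sequence β: `β₀ = 0` and `β_n = 1/(q;q)_{2n−1}` for `n ≥ 1`. -/
def baileyBeta (q : ℂ) : ℕ → ℂ
  | 0 => 0
  | n + 1 => 1 / pochN q q (2 * (n + 1) - 1)

/-!
Write `ι j = 1 / (q;q)_j`, extended by `ι j = 0` for `j < 0`, so that
`ι (j - 1) = (1 - q^j) ι j` for every integer `j` and no boundary cases arise. The right-hand side
is `S N = ∑ₖ αₖ ι(N - k) ι(N + k)`, whose summand is even in `k`; indexing `α` by `m ∈ ℤ` through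
`k = |3m + 1|` gives `α = q^(6m² + m) - q^(6m² + 7m + 2)`. A Wilf–Zeilberger certificate
`G m = q^(6m² - 2m + N) ι(N - 3m) ι(N + 3m - 1)` makes the `m`-th term of
`(1 - q^(2N)) (1 - q^(2N+1)) S (N + 1) - S N` equal to `G m - G (m + 1)`, and `G m = 0` once
`3|m| > N`. Hence `(1 - q^(2N)) (1 - q^(2N+1)) S (N + 1) = S N`, and from `S 1 = 1 / (1 - q)`
one gets `S N = 1 / (q;q)_(2N-1)`.
-/

open Finset

section

variable {q : ℂ}

def pochInv (q : ℂ) (j : ℤ) : ℂ := if 0 ≤ j then (pochN q q j.toNat)⁻¹ else 0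

@[simp]
lemma pochInv_natCast (n : ℕ) : pochInv q n = (pochN q q n)⁻¹ := by
  simp [pochInv]

lemma pochInv_of_neg {j : ℤ} (hj : j < 0) : pochInv q j = 0 := by
  simp [pochInv, hj.not_ge]

lemma pochN_succ (a q : ℂ) (n : ℕ) : pochN a q (n + 1) = pochN a q n * (1 - a * q ^ n) :=
  prod_range_succ _ n

lemma one_sub_pow_ne_zero_of_not_isOfFinOrder {R : Type*} [Ring R] {x : R}
    (hx : ¬IsOfFinOrder x) {n : ℕ} (hn : n ≠ 0) : 1 - x ^ n ≠ 0 :=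
  sub_ne_zero.2 fun h => hx (isOfFinOrder_iff_pow_eq_one.2 ⟨n, n.pos_of_ne_zero hn, h.symm⟩)

lemma pochInv_natCast_eq_mul_succ (hq : ¬IsOfFinOrder q) (n : ℕ) :
    pochInv q n = (1 - q ^ (n + 1)) * pochInv q (n + 1 : ℕ) := by
  rw [pochInv_natCast, pochInv_natCast, pochN_succ, ← pow_succ', mul_inv, mul_left_comm,
    mul_inv_cancel₀ (one_sub_pow_ne_zero_of_not_isOfFinOrder hq n.succ_ne_zero), mul_one]

lemma pochInv_sub_one (hq : ¬IsOfFinOrder q) (j : ℤ) :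
    pochInv q (j - 1) = (1 - q ^ j) * pochInv q j := by
  rcases lt_trichotomy j 0 with hj | rfl | hj
  · rw [pochInv_of_neg (by omega), pochInv_of_neg hj, mul_zero]
  · simp [pochInv_of_neg]
  · obtain ⟨n, rfl⟩ : ∃ n : ℕ, j = n + 1 := ⟨(j - 1).toNat, by omega⟩
    rw [add_sub_cancel_right, pochInv_natCast_eq_mul_succ hq, ← zpow_natCast]
    push_cast
    rfl

def baileyKernel (q : ℂ) (N : ℕ) (k : ℤ) : ℂ := pochInv q (N - k) * pochInv q (N + k)

lemma baileyKernel_of_le {N k : ℕ} (h : k ≤ N) :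
    baileyKernel q N k = (pochN q q (N - k) * pochN q q (N + k))⁻¹ := by
  rw [baileyKernel, ← Nat.cast_sub h, ← Nat.cast_add, pochInv_natCast, pochInv_natCast, mul_inv]

lemma baileyKernel_neg (N : ℕ) (k : ℤ) : baileyKernel q N (-k) = baileyKernel q N k := by
  rw [baileyKernel, baileyKernel, sub_neg_eq_add, ← sub_eq_add_neg, mul_comm]

lemma sum_range_mul_baileyKernel_of_le (f : ℕ → ℂ) {N K : ℕ} (hK : N + 1 ≤ K) :
    ∑ k ∈ range K, f k * baileyKernel q N k =
      ∑ k ∈ range (N + 1), f k * baileyKernel q N k := by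
  refine (sum_subset (range_subset_range.2 hK) fun k hkK hkN => ?_).symm
  rw [baileyKernel, pochInv_of_neg (by simp at hkN; omega), zero_mul, mul_zero]

def baileyKernelDiff (q : ℂ) (N : ℕ) (k : ℤ) : ℂ :=
  (1 - q ^ (2 * N)) * (1 - q ^ (2 * N + 1)) * baileyKernel q (N + 1) k - baileyKernel q N k

lemma baileyKernelDiff_neg (N : ℕ) (k : ℤ) :
    baileyKernelDiff q N (-k) = baileyKernelDiff q N k := by
  simp only [baileyKernelDiff, baileyKernel_neg]

def baileyAlphaInt (q : ℂ) (m : ℤ) : ℂ := q ^ (6 * m ^ 2 + m) - q ^ (6 * m ^ 2 + 7 * m + 2)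

lemma baileyAlpha_three_mul (t : ℕ) : baileyAlpha q (3 * t) = 0 := by
  simp [baileyAlpha]

lemma baileyAlpha_three_mul_add_one (t : ℕ) :
    baileyAlpha q (3 * t + 1) = baileyAlphaInt q t := by
  rw [baileyAlpha, if_neg (by omega), if_pos (by omega), show (3 * t + 1) / 3 = t by omega,
    baileyAlphaInt, ← zpow_natCast, ← zpow_natCast]
  push_cast
  rfl

lemma baileyAlpha_three_mul_add_two (t : ℕ) :
    baileyAlpha q (3 * t + 2) = baileyAlphaInt q (-(t + 1)) := by
  rw [baileyAlpha, if_neg (by omega), if_neg (by omega), show (3 * t + 2 + 1) / 3 = t + 1 by omega,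
    baileyAlphaInt, ← zpow_natCast, ← zpow_natCast, Nat.cast_sub (by nlinarith),
    Nat.cast_sub (by nlinarith)]
  push_cast
  ring_nf

def baileyCert (q : ℂ) (N : ℕ) (m : ℤ) : ℂ :=
  q ^ (6 * m ^ 2 - 2 * m + N) * pochInv q (N - 3 * m) * pochInv q (N + 3 * m - 1)

lemma baileyAlphaInt_mul_baileyKernelDiff (hq0 : q ≠ 0) (hq : ¬IsOfFinOrder q) (N : ℕ)
    (m : ℤ) :
    baileyAlphaInt q m * baileyKernelDiff q N (3 * m + 1) =
      baileyCert q N m - baileyCert q N (m + 1) := by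
  have hX1 := pochInv_sub_one hq ((N : ℤ) - 3 * m)
  have hX2 := pochInv_sub_one hq ((N : ℤ) - 3 * m - 1)
  have hX3 := pochInv_sub_one hq ((N : ℤ) - 3 * m - 2)
  have hY1 := pochInv_sub_one hq ((N : ℤ) + 3 * m + 2)
  have hY2 := pochInv_sub_one hq ((N : ℤ) + 3 * m + 1)
  have hY3 := pochInv_sub_one hq ((N : ℤ) + 3 * m)
  -- these express every `pochInv` value through `pochInv q (N - 3m)` and `pochInv q (N + 3m + 2)`,
  -- leaving a Laurent polynomial identity in `q`, `q^m`, `q^(m²)` and `q^N`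
  simp only [baileyAlphaInt, baileyKernelDiff, baileyKernel, baileyCert]
  push_cast
  ring_nf at hX1 hX2 hX3 hY1 hY2 hY3 ⊢
  rw [hX3, hX2, hX1, hY3, hY2, hY1]
  simp only [zpow_add₀ hq0, zpow_sub₀ hq0, zpow_mul, zpow_natCast, zpow_ofNat, zpow_neg]
  field_simp
  ring

lemma sum_baileyAlpha_mul_baileyKernelDiff (hq0 : q ≠ 0) (hq : ¬IsOfFinOrder q) (N M : ℕ) :
    ∑ k ∈ range (3 * M), baileyAlpha q k * baileyKernelDiff q N k =
      baileyCert q N (-M) - baileyCert q N M := by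
  induction M with
  | zero => simp
  | succ M ih =>
    have h1 := baileyAlphaInt_mul_baileyKernelDiff hq0 hq N M
    have h2 := baileyAlphaInt_mul_baileyKernelDiff hq0 hq N (-(M + 1))
    rw [← baileyKernelDiff_neg, show -(3 * -((M : ℤ) + 1) + 1) = 3 * M + 2 by ring,
      show -((M : ℤ) + 1) + 1 = -M by ring] at h2
    rw [show 3 * (M + 1) = 3 * M + 1 + 1 + 1 by ring, sum_range_succ, sum_range_succ,
      sum_range_succ, ih, baileyAlpha_three_mul, baileyAlpha_three_mul_add_one,
      baileyAlpha_three_mul_add_two]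
    push_cast
    linear_combination h1 + h2

lemma baileyCert_eq_zero {N : ℕ} {m : ℤ} (hm : (N : ℤ) < 3 * |m|) : baileyCert q N m = 0 := by
  rcases abs_cases m with ⟨hm', _⟩ | ⟨hm', _⟩
  · rw [baileyCert, pochInv_of_neg (j := N - 3 * m) (by omega), mul_zero, zero_mul]
  · rw [baileyCert, pochInv_of_neg (j := N + 3 * m - 1) (by omega), mul_zero]

def baileySum (q : ℂ) (N : ℕ) : ℂ :=
  ∑ k ∈ range (N + 1), baileyAlpha q k * baileyKernel q N k

lemma baileySum_succ_mul (hq0 : q ≠ 0) (hq : ¬IsOfFinOrder q) (N : ℕ) :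
    (1 - q ^ (2 * N)) * (1 - q ^ (2 * N + 1)) * baileySum q (N + 1) = baileySum q N := by
  have h := sum_baileyAlpha_mul_baileyKernelDiff hq0 hq N (N + 1)
  rw [baileyCert_eq_zero (by rw [abs_neg]; push_cast; grind),
    baileyCert_eq_zero (by push_cast; grind), sub_self] at h
  rw [baileySum, baileySum,
    ← sum_range_mul_baileyKernel_of_le _ (by omega : N + 1 + 1 ≤ 3 * (N + 1)),
    ← sum_range_mul_baileyKernel_of_le _ (by omega : N + 1 ≤ 3 * (N + 1)), mul_sum,
    ← sub_eq_zero, ← sum_sub_distrib, ← h]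
  exact sum_congr rfl fun k _ => by rw [baileyKernelDiff]; ring

lemma baileySum_succ (hq0 : q ≠ 0) (hq : ¬IsOfFinOrder q) (N : ℕ) :
    baileySum q (N + 1) = pochInv q (2 * N + 1 : ℕ) := by
  induction N with
  | zero =>
    have h1 := pochInv_natCast_eq_mul_succ hq 1
    have h0 : pochInv q 0 = 1 := by simp [pochInv, pochN]
    push_cast at h1
    simp [baileySum, sum_range_succ, baileyAlpha, baileyKernel, h0, h1]
  | succ N ih =>
    have hne : (1 - q ^ (2 * (N + 1))) * (1 - q ^ (2 * (N + 1) + 1)) ≠ 0 :=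
      mul_ne_zero (one_sub_pow_ne_zero_of_not_isOfFinOrder hq (by omega))
        (one_sub_pow_ne_zero_of_not_isOfFinOrder hq (by omega))
    rw [← mul_right_inj' hne, baileySum_succ_mul hq0 hq, ih, pochInv_natCast_eq_mul_succ hq,
      pochInv_natCast_eq_mul_succ hq (_ + 1), show 2 * (N + 1) + 1 = 2 * N + 1 + 1 + 1 by ring]
    ring

end

/-- `(α, β)` is a Bailey pair relative to `(1, q)`:
`β_N = ∑_{k=0}^{N} α_k / ((q;q)_{N−k} (q;q)_{N+k})` for all `N ≥ 0`. -/
theorem bailey_pair (q : ℂ) (hq0 : 0 < ‖q‖) (hq1 : ‖q‖ < 1)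
    (N : ℕ) :
    baileyBeta q N =
      ∑ k ∈ Finset.range (N + 1),
        baileyAlpha q k / (pochN q q (N - k) * pochN q q (N + k)) := by
  have hq : ¬IsOfFinOrder q := fun h => hq1.ne h.norm_eq_one
  have hsum : ∑ k ∈ range (N + 1), baileyAlpha q k / (pochN q q (N - k) * pochN q q (N + k)) =
      baileySum q N := sum_congr rfl fun k hk => by
    rw [baileyKernel_of_le (Nat.lt_succ_iff.1 (mem_range.1 hk)), div_eq_mul_inv]
  rw [hsum]
  cases N with
  | zero => simp [baileyBeta, baileySum, baileyAlpha]
  | succ N =>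
    rw [baileySum_succ (norm_pos_iff.1 hq0) hq, baileyBeta, pochInv_natCast, one_div,
      show 2 * (N + 1) - 1 = 2 * N + 1 by omega]
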